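/- arXiv:1311.4969 — 6 statements merged into one kernel-verified Lean document; each statement's English description precedes it below -/
import Mathlib

section
/- Let (Ω, 𝓕, μ) be a probability space, 𝓖 ⊆ 𝓕 a sub-σ-algebra, and let r, τ ∈ ℝ. Let S : Ω → ℝ be a nonnegative integrable random variable, let S' be a 𝓖-measurable random variable satisfying E[e^{−rτ}·S | 𝓖] = S' almost surely, let X be a nonnegative integrable 𝓖-measurable random variable, and let c ∈ ℝ. Then almost surely E[e^{−rτ}·(X + S − c)⁺ | 𝓖] = 1_{{X < c}} · E[e^{−rτ}·(S − (c − X))⁺ | 𝓖] + 1_{{X ≥ c}} · (S' + e^{−rτ}·(X − c)). -/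
open MeasureTheory

section CondExp

variable {α E : Type*} {m m₀ : MeasurableSpace α} {μ : Measure α}
  [NormedAddCommGroup E] [NormedSpace ℝ E] [CompleteSpace E] {f g : α → E}

theorem condExp_indicator_add_indicator (hm : m ≤ m₀) {s t : Set α} (hs : MeasurableSet[m] s)
    (ht : MeasurableSet[m] t) (hf : Integrable f μ) (hg : Integrable g μ) :
    μ[s.indicator f + t.indicator g | m] =ᵐ[μ] s.indicator (μ[f | m]) + t.indicator (μ[g | m]) :=
  (condExp_add (hf.indicator (hm s hs)) (hg.indicator (hm t ht)) m).trans
    ((condExp_indicator hf hs).add (condExp_indicator hg ht))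

theorem condExp_add_of_stronglyMeasurable_right (hm : m ≤ m₀) [SigmaFinite (μ.trim hm)]
    (hf : Integrable f μ) (hg_meas : StronglyMeasurable[m] g) (hg : Integrable g μ) :
    μ[f + g | m] =ᵐ[μ] μ[f | m] + g := by
  simpa only [condExp_of_stronglyMeasurable hm hg_meas hg] using condExp_add hf hg m

end CondExp

theorem mul_max_add_sub_zero_eq_indicator_add_indicator {Ω : Type*} {S X : Ω → ℝ} (D c : ℝ)
    (hS : ∀ ω, 0 ≤ S ω) :
    (fun ω => D * max (X ω + S ω - c) 0) =
      {ω | X ω < c}.indicator (fun ω => D * max (S ω - (c - X ω)) 0) +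
        {ω | c ≤ X ω}.indicator (fun ω => D * S ω + D * (X ω - c)) := by
  funext ω
  by_cases h : X ω < c
  · rw [Pi.add_apply, Set.indicator_of_mem (s := {ω | X ω < c}) h,
      Set.indicator_of_notMem (s := {ω | c ≤ X ω}) (not_le.2 h), add_zero]
    ring_nf
  · rw [Pi.add_apply, Set.indicator_of_notMem (s := {ω | X ω < c}) h,
      Set.indicator_of_mem (s := {ω | c ≤ X ω}) (le_of_not_gt h),
      zero_add, max_eq_left (by linarith [hS ω])]
    ring

theorem terminal_conditioning_step_general
    {Ω : Type*} {mΩ : MeasurableSpace Ω} {μ : Measure Ω} [IsProbabilityMeasure μ]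
    {m : MeasurableSpace Ω} (hm : m ≤ mΩ) (r τ : ℝ)
    (S S' X : Ω → ℝ) (c : ℝ)
    (hS_nonneg : ∀ ω, 0 ≤ S ω) (hS_int : Integrable S μ)
    (hS' : (μ[fun ω => Real.exp (-(r * τ)) * S ω | m]) =ᵐ[μ] S')
    (hX_int : Integrable X μ)
    (hX_meas : StronglyMeasurable[m] X) :
    (μ[fun ω => Real.exp (-(r * τ)) * max (X ω + S ω - c) 0 | m]) =ᵐ[μ]
      fun ω =>
        ({ω' | X ω' < c}.indicator (fun _ => (1 : ℝ)) ω) *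
            (μ[fun ω' => Real.exp (-(r * τ)) * max (S ω' - (c - X ω')) 0 | m]) ω
          + ({ω' | c ≤ X ω'}.indicator (fun _ => (1 : ℝ)) ω) *
              (S' ω + Real.exp (-(r * τ)) * (X ω - c)) := by
  set D := Real.exp (-(r * τ))
  have hbelow : MeasurableSet[m] {ω | X ω < c} := hX_meas.measurable measurableSet_Iio
  have habove : MeasurableSet[m] {ω | c ≤ X ω} := hX_meas.measurable measurableSet_Ici
  have hcall_int : Integrable (fun ω => D * max (S ω - (c - X ω)) 0) μ :=
    (hS_int.sub ((integrable_const c).sub hX_int)).pos_part.const_mul D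
  have hexcess_int : Integrable (fun ω => D * (X ω - c)) μ :=
    (hX_int.sub (integrable_const c)).const_mul D
  have hforward_int : Integrable (fun ω => D * S ω + D * (X ω - c)) μ :=
    (hS_int.const_mul D).add hexcess_int
  have hforward : μ[fun ω => D * S ω + D * (X ω - c) | m] =ᵐ[μ]
      fun ω => S' ω + D * (X ω - c) :=
    (condExp_add_of_stronglyMeasurable_right hm (hS_int.const_mul D)
      ((hX_meas.sub stronglyMeasurable_const).const_mul D) hexcess_int).trans
      (hS'.add Filter.EventuallyEq.rfl)
  rw [mul_max_add_sub_zero_eq_indicator_add_indicator D c hS_nonneg]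
  filter_upwards [condExp_indicator_add_indicator hm hbelow habove hcall_int hforward_int,
    hforward] with ω hω hforward_ω
  rw [hω]
  simp [Set.indicator_apply, hforward_ω]

theorem terminal_conditioning_step
    {Ω : Type*} {mΩ : MeasurableSpace Ω} {μ : Measure Ω} [IsProbabilityMeasure μ]
    {m : MeasurableSpace Ω} (hm : m ≤ mΩ) (r τ : ℝ)
    (S S' X : Ω → ℝ) (c : ℝ)
    (hS_nonneg : ∀ ω, 0 ≤ S ω) (hS_int : Integrable S μ)
    (hS'_meas : StronglyMeasurable[m] S')
    (hS' : (μ[fun ω => Real.exp (-(r * τ)) * S ω | m]) =ᵐ[μ] S')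
    (hX_nonneg : ∀ ω, 0 ≤ X ω) (hX_int : Integrable X μ)
    (hX_meas : StronglyMeasurable[m] X) :
    (μ[fun ω => Real.exp (-(r * τ)) * max (X ω + S ω - c) 0 | m]) =ᵐ[μ]
      fun ω =>
        ({ω' | X ω' < c}.indicator (fun _ => (1 : ℝ)) ω) *
            (μ[fun ω' => Real.exp (-(r * τ)) * max (S ω' - (c - X ω')) 0 | m]) ω
          + ({ω' | c ≤ X ω'}.indicator (fun _ => (1 : ℝ)) ω) *
              (S' ω + Real.exp (-(r * τ)) * (X ω - c)) :=
  terminal_conditioning_step_general hm r τ S S' X c hS_nonneg hS_int hS' hX_int hX_meas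
end

section
/- Let (Ω, 𝓕, μ) be a probability space, let S : Ω → (0, ∞) be a random variable, let α > 0 satisfy E[S^{α+1}] < ∞, and let r, τ ≥ 0. Define z : ℝ → ℝ by z(k) = e^{αk} · E[e^{−rτ}·(S − e^k)⁺]. Then for every v ∈ ℝ the function k ↦ e^{ivk}·z(k) is integrable on ℝ, and ∫_ℝ e^{ivk}·z(k) dk = e^{−rτ} · E[S^{α+1+iv}] / ((α + iv)·(α + 1 + iv)), where S^{α+1+iv} := exp((α + 1 + iv)·log S) ∈ ℂ and the denominator equals α² + α − v² + i(2α+1)v. -/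
open MeasureTheory Complex Set

/-!
With `c = α + iv`, the `k`-integrand `e^{ck} (s - e^k)⁺` vanishes for `k > log s` and equals
`s e^{ck} - e^{(c+1)k}` below, so its integral is `s^{c+1} / (c (c + 1))`. The same formula with
`c = α` computes the `k`-integral of the absolute value, which is integrable in `ω` by the moment
condition; Fubini then swaps the `k`-integral with the expectation.
-/

section CallPayoff

variable {c : ℂ} {s : ℝ}

lemma cexp_mul_max_sub_exp_eq_indicator (hs : 0 < s) (c : ℂ) (k : ℝ) :
    cexp (c * k) * ((max (s - Real.exp k) 0 : ℝ) : ℂ)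
      = (Iic (Real.log s)).indicator
          (fun k : ℝ => s * cexp (c * k) - cexp ((c + 1) * k)) k := by
  by_cases hk : k ≤ Real.log s
  · have hks : Real.exp k ≤ s := (Real.le_log_iff_exp_le hs).1 hk
    rw [indicator_of_mem (mem_Iic.2 hk), max_eq_left (sub_nonneg.2 hks), add_mul, one_mul,
      Complex.exp_add]
    push_cast
    ring
  · have hsk : s < Real.exp k := (Real.log_lt_iff_lt_exp hs).1 (not_le.1 hk)
    rw [indicator_of_notMem (fun h => hk (mem_Iic.1 h)), max_eq_right (sub_nonpos.2 hsk.le)]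
    simp

lemma integrableOn_sub_cexp_mul_Iic (hc : 0 < c.re) (s L : ℝ) :
    IntegrableOn (fun k : ℝ => s * cexp (c * k) - cexp ((c + 1) * k)) (Iic L) :=
  ((integrableOn_exp_mul_complex_Iic hc L).const_mul _).sub
    (integrableOn_exp_mul_complex_Iic (by simpa using hc.trans (lt_add_one c.re)) L)

theorem integrable_cexp_mul_max_sub_exp (hc : 0 < c.re) (hs : 0 < s) :
    Integrable (fun k : ℝ => cexp (c * k) * ((max (s - Real.exp k) 0 : ℝ) : ℂ)) := by
  simp_rw [cexp_mul_max_sub_exp_eq_indicator hs]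
  exact (integrable_indicator_iff measurableSet_Iic).2 (integrableOn_sub_cexp_mul_Iic hc s _)

theorem integral_cexp_mul_max_sub_exp (hc : 0 < c.re) (hs : 0 < s) :
    ∫ k : ℝ, cexp (c * k) * ((max (s - Real.exp k) 0 : ℝ) : ℂ)
      = cexp ((c + 1) * Real.log s) / (c * (c + 1)) := by
  have hc0 : c ≠ 0 := by rintro rfl; simp at hc
  have hc1 : 0 < (c + 1).re := by simpa using hc.trans (lt_add_one c.re)
  have hc10 : c + 1 ≠ 0 := by intro h; simp [h] at hc1
  have hs_exp : (s : ℂ) = cexp (Real.log s) := by rw [← ofReal_exp, Real.exp_log hs]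
  simp_rw [cexp_mul_max_sub_exp_eq_indicator hs]
  rw [integral_indicator measurableSet_Iic,
    integral_sub ((integrableOn_exp_mul_complex_Iic hc _).const_mul _)
      (integrableOn_exp_mul_complex_Iic hc1 _),
    integral_const_mul, integral_exp_mul_complex_Iic hc, integral_exp_mul_complex_Iic hc1,
    hs_exp, add_mul, one_mul, Complex.exp_add]
  field_simp
  ring

theorem integral_exp_mul_max_sub_exp {a : ℝ} (ha : 0 < a) (hs : 0 < s) :
    ∫ k : ℝ, Real.exp (a * k) * max (s - Real.exp k) 0 = s ^ (a + 1) / (a * (a + 1)) := by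
  apply ofReal_injective
  rw [← integral_complex_ofReal, Real.rpow_def_of_pos hs]
  push_cast
  rw [integral_cexp_mul_max_sub_exp (c := a) (by simpa using ha) hs, mul_comm (Real.log s : ℂ)]

end CallPayoff

section Expectation

variable {Ω : Type*} {mΩ : MeasurableSpace Ω} {μ : Measure Ω}

lemma AEMeasurable.of_rpow {f : Ω → ℝ} {p : ℝ} (h : AEMeasurable (fun ω => f ω ^ p) μ)
    (hf : ∀ ω, 0 ≤ f ω) (hp : p ≠ 0) :
    AEMeasurable f μ :=
  (h.pow_const p⁻¹).congr (ae_of_all _ fun ω => Real.rpow_rpow_inv (hf ω) hp)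

variable [SFinite μ] {S : Ω → ℝ} {c : ℂ}

theorem integrable_prod_cexp_mul_max_sub_exp (hS : ∀ ω, 0 < S ω) (hSm : AEMeasurable S μ)
    (hc : 0 < c.re) (hmoment : Integrable (fun ω => S ω ^ (c.re + 1)) μ) :
    Integrable (fun p : ℝ × Ω => cexp (c * p.1) * ((max (S p.2 - Real.exp p.1) 0 : ℝ) : ℂ))
      (volume.prod μ) := by
  have hmeas : AEStronglyMeasurable
      (fun p : ℝ × Ω => cexp (c * p.1) * ((max (S p.2 - Real.exp p.1) 0 : ℝ) : ℂ))
      (volume.prod μ) := by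
    have hS' : AEMeasurable (fun p : ℝ × Ω => S p.2) (volume.prod μ) :=
      hSm.comp_quasiMeasurePreserving Measure.quasiMeasurePreserving_snd
    refine (AEMeasurable.mul (by fun_prop) ?_).aestronglyMeasurable
    exact measurable_ofReal.comp_aemeasurable ((hS'.sub (by fun_prop)).max aemeasurable_const)
  have hnorm : ∀ (k : ℝ) ω, ‖cexp (c * k) * ((max (S ω - Real.exp k) 0 : ℝ) : ℂ)‖
      = Real.exp (c.re * k) * max (S ω - Real.exp k) 0 := fun k ω => by
    rw [norm_mul, norm_exp, norm_real, Real.norm_of_nonneg (le_max_right _ _)]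
    simp
  refine (integrable_prod_iff' hmeas).2
    ⟨ae_of_all _ fun ω => integrable_cexp_mul_max_sub_exp hc (hS ω), ?_⟩
  simp_rw [hnorm, integral_exp_mul_max_sub_exp hc (hS _)]
  exact hmoment.div_const _

theorem integral_integral_cexp_mul_max_sub_exp (hS : ∀ ω, 0 < S ω) (hSm : AEMeasurable S μ)
    (hc : 0 < c.re) (hmoment : Integrable (fun ω => S ω ^ (c.re + 1)) μ) :
    ∫ k : ℝ, ∫ ω, cexp (c * k) * ((max (S ω - Real.exp k) 0 : ℝ) : ℂ) ∂μ
      = (∫ ω, cexp ((c + 1) * Real.log (S ω)) ∂μ) / (c * (c + 1)) := by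
  rw [integral_integral_swap (integrable_prod_cexp_mul_max_sub_exp hS hSm hc hmoment)]
  simp_rw [integral_cexp_mul_max_sub_exp hc (hS _)]
  exact integral_div _ _

end Expectation

theorem carr_madan_fourier_transform_general
    {Ω : Type*} {mΩ : MeasurableSpace Ω} {μ : Measure Ω} [IsProbabilityMeasure μ]
    (S : Ω → ℝ) (hS_pos : ∀ ω, 0 < S ω)
    (α : ℝ) (hα : 0 < α)
    (hmoment : Integrable (fun ω => S ω ^ (α + 1 : ℝ)) μ)
    (r τ : ℝ)
    (z : ℝ → ℝ)
    (hz : ∀ k : ℝ, z k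
        = Real.exp (α * k) * ∫ ω, Real.exp (-(r * τ)) * max (S ω - Real.exp k) 0 ∂μ) :
    ∀ v : ℝ,
      Integrable (fun k : ℝ => Complex.exp (Complex.I * v * k) * (z k : ℂ)) ∧
      (∫ k : ℝ, Complex.exp (Complex.I * v * k) * (z k : ℂ))
        = Complex.exp (-(r * τ : ℝ)) *
            (∫ ω, Complex.exp (((α : ℂ) + 1 + Complex.I * v) * (Real.log (S ω) : ℂ)) ∂μ)
            / (((α : ℂ) + Complex.I * v) * ((α : ℂ) + 1 + Complex.I * v)) ∧
      ((α : ℂ) + Complex.I * v) * ((α : ℂ) + 1 + Complex.I * v)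
        = ((α : ℂ)^2 + α - (v : ℂ)^2) + Complex.I * (2 * α + 1) * v := by
  intro v
  set c : ℂ := α + I * v with hc_def
  have hc : 0 < c.re := by simpa [c] using hα
  have hmoment' : Integrable (fun ω => S ω ^ (c.re + 1)) μ := by simpa [c] using hmoment
  have hSm : AEMeasurable S μ :=
    hmoment.aemeasurable.of_rpow (fun ω => (hS_pos ω).le) (by positivity)
  have hfourier : (fun k : ℝ => cexp (I * v * k) * (z k : ℂ))
      = fun k : ℝ => cexp (-(r * τ : ℝ)) *
          ∫ ω, cexp (c * k) * ((max (S ω - Real.exp k) 0 : ℝ) : ℂ) ∂μ := by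
    funext k
    rw [hz k, integral_const_mul, integral_const_mul, integral_complex_ofReal, hc_def, add_mul,
      Complex.exp_add]
    push_cast
    ring
  have hjoint := integrable_prod_cexp_mul_max_sub_exp hS_pos hSm hc hmoment'
  refine ⟨?_, ?_, by linear_combination (v : ℂ) ^ 2 * I_sq⟩
  · rw [hfourier]
    exact hjoint.integral_prod_left.const_mul _
  · rw [hfourier, integral_const_mul,
      integral_integral_cexp_mul_max_sub_exp hS_pos hSm hc hmoment', mul_div_assoc,
      show c + 1 = α + 1 + I * v by ring]

theorem carr_madan_fourier_transform
    {Ω : Type*} {mΩ : MeasurableSpace Ω} {μ : Measure Ω} [IsProbabilityMeasure μ]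
    (S : Ω → ℝ) (hS_pos : ∀ ω, 0 < S ω)
    (α : ℝ) (hα : 0 < α)
    (hmoment : Integrable (fun ω => S ω ^ (α + 1 : ℝ)) μ)
    (r τ : ℝ) (hr : 0 ≤ r) (hτ : 0 ≤ τ)
    (z : ℝ → ℝ)
    (hz : ∀ k : ℝ, z k
        = Real.exp (α * k) * ∫ ω, Real.exp (-(r * τ)) * max (S ω - Real.exp k) 0 ∂μ) :
    ∀ v : ℝ,
      Integrable (fun k : ℝ => Complex.exp (Complex.I * v * k) * (z k : ℂ)) ∧
      (∫ k : ℝ, Complex.exp (Complex.I * v * k) * (z k : ℂ))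
        = Complex.exp (-(r * τ : ℝ)) *
            (∫ ω, Complex.exp (((α : ℂ) + 1 + Complex.I * v) * (Real.log (S ω) : ℂ)) ∂μ)
            / (((α : ℂ) + Complex.I * v) * ((α : ℂ) + 1 + Complex.I * v)) ∧
      ((α : ℂ) + Complex.I * v) * ((α : ℂ) + 1 + Complex.I * v)
        = ((α : ℂ)^2 + α - (v : ℂ)^2) + Complex.I * (2 * α + 1) * v :=
  carr_madan_fourier_transform_general (mΩ := mΩ) S hS_pos α hα hmoment r τ z hz
end

section
/- For every x > 0 and every K > 0, the function K ↦ c(x, K) is differentiable at K with derivative −e^{−rτ}·N(d2(x, K)); that is, ∂c/∂K(x, K) = −e^{−rτ}·N(d2(x, K)). -/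
open MeasureTheory

/-- Standard normal cumulative distribution function. -/
noncomputable def stdNormalCDF (y : ℝ) : ℝ :=
  ∫ t in Set.Iic y, Real.exp (-t ^ 2 / 2) / Real.sqrt (2 * Real.pi)

/-- Standard normal density. -/
noncomputable def stdNormalPDF (y : ℝ) : ℝ :=
  Real.exp (-y ^ 2 / 2) / Real.sqrt (2 * Real.pi)

/-- Black–Scholes `d1`. -/
noncomputable def bsD1 (r σ τ x K : ℝ) : ℝ :=
  (Real.log (x / K) + (r + σ ^ 2 / 2) * τ) / (σ * Real.sqrt τ)

/-- Black–Scholes `d2`. -/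
noncomputable def bsD2 (r σ τ x K : ℝ) : ℝ :=
  bsD1 r σ τ x K - σ * Real.sqrt τ

/-- Black–Scholes European call price. -/
noncomputable def bsCall (r σ τ x K : ℝ) : ℝ :=
  x * stdNormalCDF (bsD1 r σ τ x K) - K * Real.exp (-(r * τ)) * stdNormalCDF (bsD2 r σ τ x K)

/-! Differentiating `c(x, K)` in `K` produces, besides `-e^{-rτ} N(d₂)`, the two terms
`x n(d₁) ∂d₁/∂K` and `-K e^{-rτ} n(d₂) ∂d₂/∂K`. They cancel: `d₁` and `d₂` differ by a constant,
so `∂d₁/∂K = ∂d₂/∂K`, and completing the square in `n(d₁ - σ√τ)` gives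
`x n(d₁) = K e^{-rτ} n(d₂)`. -/

theorem hasDerivAt_integral_Iic {E : Type*} [NormedAddCommGroup E] [NormedSpace ℝ E]
    [CompleteSpace E] {f : ℝ → E} (hf : Integrable f) {y : ℝ} (hy : ContinuousAt f y) :
    HasDerivAt (fun u => ∫ t in Set.Iic u, f t) (f y) y := by
  have hsplit : (fun u => ∫ t in Set.Iic u, f t) =
      fun u => (∫ t in Set.Iic 0, f t) + ∫ t in (0 : ℝ)..u, f t := by
    funext u
    rw [← intervalIntegral.integral_Iic_sub_Iic hf.integrableOn hf.integrableOn, add_sub_cancel]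
  rw [hsplit]
  exact (intervalIntegral.integral_hasDerivAt_right hf.intervalIntegrable
    hf.aestronglyMeasurable.stronglyMeasurableAtFilter hy).const_add _

theorem integrable_stdNormalPDF : Integrable stdNormalPDF := by
  convert (integrable_exp_neg_mul_sq (by norm_num : (0 : ℝ) < 1 / 2)).div_const
    (Real.sqrt (2 * Real.pi)) using 2 with t
  rw [stdNormalPDF]
  ring_nf

theorem hasDerivAt_stdNormalCDF (y : ℝ) : HasDerivAt stdNormalCDF (stdNormalPDF y) y :=
  hasDerivAt_integral_Iic integrable_stdNormalPDF (by unfold stdNormalPDF; fun_prop)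

theorem stdNormalPDF_sub (d s : ℝ) :
    stdNormalPDF (d - s) = stdNormalPDF d * Real.exp (d * s - s ^ 2 / 2) := by
  rw [stdNormalPDF, stdNormalPDF, div_mul_eq_mul_div, ← Real.exp_add]
  ring_nf

theorem mul_stdNormalPDF_bsD1 (r τ x K : ℝ) {σ : ℝ} (hσ : σ ≠ 0) (hτ : 0 < τ) (hx : 0 < x)
    (hK : 0 < K) :
    x * stdNormalPDF (bsD1 r σ τ x K) =
      K * Real.exp (-(r * τ)) * stdNormalPDF (bsD2 r σ τ x K) := by
  have hs : σ * Real.sqrt τ ≠ 0 := mul_ne_zero hσ (Real.sqrt_pos.mpr hτ).ne'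
  have hexponent : bsD1 r σ τ x K * (σ * Real.sqrt τ) - (σ * Real.sqrt τ) ^ 2 / 2 =
      Real.log (x / K) + r * τ := by
    rw [bsD1, div_mul_cancel₀ _ hs, mul_pow, Real.sq_sqrt hτ.le]
    ring
  rw [bsD2, stdNormalPDF_sub, hexponent, Real.exp_add, Real.exp_log (div_pos hx hK),
    Real.exp_neg]
  field_simp

theorem hasDerivAt_bsD1_strike (r σ τ : ℝ) {x K : ℝ} (hx : x ≠ 0) (hK : K ≠ 0) :
    HasDerivAt (fun k => bsD1 r σ τ x k) (-(K * (σ * Real.sqrt τ))⁻¹) K := by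
  have hlog : HasDerivAt (fun k => Real.log (x / k)) (-K⁻¹) K := by
    refine (((hasDerivAt_inv hK).const_mul x).log (div_ne_zero hx hK)).congr_deriv ?_
    field_simp
  refine ((hlog.add_const ((r + σ ^ 2 / 2) * τ)).div_const (σ * Real.sqrt τ)).congr_deriv ?_
  ring

theorem bs_call_strike_derivative (r σ τ : ℝ) (hσ : 0 < σ) (hτ : 0 < τ) :
    ∀ x : ℝ, 0 < x → ∀ K : ℝ, 0 < K →
      HasDerivAt (fun k => bsCall r σ τ x k)
        (-(Real.exp (-(r * τ)) * stdNormalCDF (bsD2 r σ τ x K))) K := by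
  intro x hx K hK
  set d' := -(K * (σ * Real.sqrt τ))⁻¹
  have hd1 : HasDerivAt (fun k => bsD1 r σ τ x k) d' K :=
    hasDerivAt_bsD1_strike r σ τ hx.ne' hK.ne'
  have hd2 : HasDerivAt (fun k => bsD2 r σ τ x k) d' K := hd1.sub_const _
  have hdiscount : HasDerivAt (fun k => k * Real.exp (-(r * τ))) (Real.exp (-(r * τ))) K :=
    hasDerivAt_mul_const _
  have hN1 : HasDerivAt (fun k => stdNormalCDF (bsD1 r σ τ x k))
      (stdNormalPDF (bsD1 r σ τ x K) * d') K := (hasDerivAt_stdNormalCDF _).comp K hd1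
  have hN2 : HasDerivAt (fun k => stdNormalCDF (bsD2 r σ τ x k))
      (stdNormalPDF (bsD2 r σ τ x K) * d') K := (hasDerivAt_stdNormalCDF _).comp K hd2
  unfold bsCall
  refine ((hN1.const_mul x).sub (hdiscount.mul hN2)).congr_deriv ?_
  linear_combination d' * mul_stdNormalPDF_bsD1 r τ x K hσ.ne' hτ hx hK
end

section
/- Fix E > 0 and define g : (0, 2E) → ℝ by g(x) = (1/2)·c(x, 2E − x). Then for every x with 0 < x < 2E, g is twice differentiable at x with g''(x) = (1/(2·σ·√(2πτ))) · ( (1/x)·exp(−d1(x, 2E−x)²/2) + (e^{−rτ}/(2E−x))·exp(−d2(x, 2E−x)²/2) + (2/(2E−x))·exp(−d1(x, 2E−x)²/2) ). -/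
open MeasureTheory

/-! Along the line `K = c - x` the call price has derivative `N(d1) + e^{-rτ} N(d2)`: the terms
`x n(d1) d1'` and `K e^{-rτ} n(d2) d2'` produced by the chain rule cancel, because
`x n(d1) = K e^{-rτ} n(d2)`. Differentiating once more, `d1' = d2' = c / (x K σ √τ)`, and the
same identity turns `(n(d1) + e^{-rτ} n(d2)) d1' / 2` into the claimed three-term formula. -/

lemma integrable_stdNormal_density :
    Integrable (fun t : ℝ => Real.exp (-t ^ 2 / 2) / Real.sqrt (2 * Real.pi)) := by
  have h := (integrable_exp_neg_mul_sq (b := 1 / 2) (by norm_num)).div_const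
    (Real.sqrt (2 * Real.pi))
  convert h using 4 with t
  ring

lemma hasDerivAt_stdNormalCDF_s14 (y : ℝ) :
    HasDerivAt stdNormalCDF (Real.exp (-y ^ 2 / 2) / Real.sqrt (2 * Real.pi)) y := by
  have hint := integrable_stdNormal_density
  have hcont : Continuous fun t : ℝ => Real.exp (-t ^ 2 / 2) / Real.sqrt (2 * Real.pi) := by
    fun_prop
  have hsplit : stdNormalCDF = fun z => stdNormalCDF 0 +
      ∫ t in (0 : ℝ)..z, Real.exp (-t ^ 2 / 2) / Real.sqrt (2 * Real.pi) := by
    funext z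
    rw [stdNormalCDF, stdNormalCDF,
      ← intervalIntegral.integral_Iic_sub_Iic hint.integrableOn hint.integrableOn, add_sub_cancel]
  rw [hsplit]
  exact (intervalIntegral.integral_hasDerivAt_right hint.intervalIntegrable
    hcont.aestronglyMeasurable.stronglyMeasurableAtFilter hcont.continuousAt).const_add _

section BlackScholes

variable {r σ τ : ℝ}

lemma mul_exp_bsD1_sq (hσ : 0 < σ) (hτ : 0 < τ) {x K : ℝ} (hx : 0 < x) (hK : 0 < K) :
    x * Real.exp (-(bsD1 r σ τ x K) ^ 2 / 2)
      = K * Real.exp (-(r * τ)) * Real.exp (-(bsD2 r σ τ x K) ^ 2 / 2) := by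
  have hs : σ * Real.sqrt τ ≠ 0 := (mul_pos hσ (Real.sqrt_pos.mpr hτ)).ne'
  have hs2 : (σ * Real.sqrt τ) ^ 2 = σ ^ 2 * τ := by rw [mul_pow, Real.sq_sqrt hτ.le]
  have hd1 : bsD1 r σ τ x K * (σ * Real.sqrt τ)
      = Real.log x - Real.log K + (r + σ ^ 2 / 2) * τ := by
    rw [bsD1, div_mul_cancel₀ _ hs, Real.log_div hx.ne' hK.ne']
  rw [bsD2]
  generalize bsD1 r σ τ x K = d at hd1
  rw [← Real.exp_log hx, ← Real.exp_log hK]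
  simp only [← Real.exp_add]
  congr 1
  linear_combination -hd1 + hs2 / 2

variable {c x : ℝ}

lemma hasDerivAt_bsD1_sub (hx : 0 < x) (hxc : x < c) :
    HasDerivAt (fun z => bsD1 r σ τ z (c - z)) (c / (x * (c - x)) / (σ * Real.sqrt τ)) x := by
  have hK : 0 < c - x := sub_pos.mpr hxc
  have hratio : HasDerivAt (fun z => z / (c - z)) ((1 * (c - x) - x * (0 - 1)) / (c - x) ^ 2) x :=
    (hasDerivAt_id' x).div ((hasDerivAt_const x c).sub (hasDerivAt_id' x)) hK.ne'
  refine (((hratio.log (div_pos hx hK).ne').add_const _).div_const _).congr_deriv ?_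
  field_simp
  ring

lemma hasDerivAt_bsD2_sub (hx : 0 < x) (hxc : x < c) :
    HasDerivAt (fun z => bsD2 r σ τ z (c - z)) (c / (x * (c - x)) / (σ * Real.sqrt τ)) x :=
  (hasDerivAt_bsD1_sub hx hxc).sub_const _

lemma hasDerivAt_bsCall_sub (hσ : 0 < σ) (hτ : 0 < τ) (hx : 0 < x) (hxc : x < c) :
    HasDerivAt (fun z => bsCall r σ τ z (c - z))
      (stdNormalCDF (bsD1 r σ τ x (c - x))
        + Real.exp (-(r * τ)) * stdNormalCDF (bsD2 r σ τ x (c - x))) x := by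
  have hN1 := (hasDerivAt_stdNormalCDF_s14 _).comp x
    (hasDerivAt_bsD1_sub (r := r) (σ := σ) (τ := τ) hx hxc)
  have hN2 := (hasDerivAt_stdNormalCDF_s14 _).comp x
    (hasDerivAt_bsD2_sub (r := r) (σ := σ) (τ := τ) hx hxc)
  have hcall := ((hasDerivAt_id' x).mul hN1).sub
    ((((hasDerivAt_const x c).sub (hasDerivAt_id' x)).mul_const (Real.exp (-(r * τ)))).mul hN2)
  refine hcall.congr_deriv ?_
  simp only [Function.comp_apply, Pi.sub_apply]
  linear_combination (c / (x * (c - x)) / (σ * Real.sqrt τ) / Real.sqrt (2 * Real.pi)) *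
    mul_exp_bsD1_sq (r := r) hσ hτ hx (sub_pos.mpr hxc)

lemma hasDerivAt_deriv_bsCall_sub (hσ : 0 < σ) (hτ : 0 < τ) (hx : 0 < x) (hxc : x < c) :
    HasDerivAt (deriv fun z => bsCall r σ τ z (c - z))
      ((Real.exp (-(bsD1 r σ τ x (c - x)) ^ 2 / 2)
          + Real.exp (-(r * τ)) * Real.exp (-(bsD2 r σ τ x (c - x)) ^ 2 / 2))
        / Real.sqrt (2 * Real.pi) * (c / (x * (c - x)) / (σ * Real.sqrt τ))) x := by
  have hfirst : (deriv fun z => bsCall r σ τ z (c - z)) =ᶠ[nhds x] fun y =>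
      stdNormalCDF (bsD1 r σ τ y (c - y))
        + Real.exp (-(r * τ)) * stdNormalCDF (bsD2 r σ τ y (c - y)) := by
    filter_upwards [isOpen_Ioo.mem_nhds ⟨hx, hxc⟩] with y hy
    exact (hasDerivAt_bsCall_sub hσ hτ hy.1 hy.2).deriv
  refine HasDerivAt.congr_of_eventuallyEq ?_ hfirst
  refine (((hasDerivAt_stdNormalCDF_s14 _).comp x (hasDerivAt_bsD1_sub hx hxc)).add
    (((hasDerivAt_stdNormalCDF_s14 _).comp x (hasDerivAt_bsD2_sub hx hxc)).const_mul _)).congr_deriv ?_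
  ring

end BlackScholes

theorem asian_continuation_second_derivative_general (r σ τ : ℝ) (hσ : 0 < σ) (hτ : 0 < τ)
    (E : ℝ) :
    ∀ x : ℝ, 0 < x → x < 2 * E →
      DifferentiableAt ℝ (fun y => (1 / 2) * bsCall r σ τ y (2 * E - y)) x ∧
      HasDerivAt (deriv (fun y => (1 / 2) * bsCall r σ τ y (2 * E - y)))
        ((1 / (2 * σ * Real.sqrt (2 * Real.pi * τ))) *
          ((1 / x) * Real.exp (-(bsD1 r σ τ x (2 * E - x)) ^ 2 / 2)
            + (Real.exp (-(r * τ)) / (2 * E - x)) *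
                Real.exp (-(bsD2 r σ τ x (2 * E - x)) ^ 2 / 2)
            + (2 / (2 * E - x)) * Real.exp (-(bsD1 r σ τ x (2 * E - x)) ^ 2 / 2))) x := by
  intro x hx hxc
  have hK : 0 < 2 * E - x := sub_pos.mpr hxc
  refine ⟨((hasDerivAt_bsCall_sub hσ hτ hx hxc).const_mul _).differentiableAt, ?_⟩
  rw [deriv_const_mul_field']
  refine ((hasDerivAt_deriv_bsCall_sub hσ hτ hx hxc).const_mul _).congr_deriv ?_
  have key := mul_exp_bsD1_sq (r := r) hσ hτ hx hK
  rw [Real.sqrt_mul (by positivity : (0 : ℝ) ≤ 2 * Real.pi) τ]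
  generalize Real.exp (-(bsD1 r σ τ x (2 * E - x)) ^ 2 / 2) = n₁ at key ⊢
  generalize Real.exp (-(bsD2 r σ τ x (2 * E - x)) ^ 2 / 2) = n₂ at key ⊢
  have hsτ : Real.sqrt τ ≠ 0 := (Real.sqrt_pos.mpr hτ).ne'
  have hsπ : Real.sqrt (2 * Real.pi) ≠ 0 := (Real.sqrt_pos.mpr (by positivity)).ne'
  field_simp
  linear_combination -key

theorem asian_continuation_second_derivative (r σ τ : ℝ) (hσ : 0 < σ) (hτ : 0 < τ)
    (E : ℝ) (hE : 0 < E) :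
    ∀ x : ℝ, 0 < x → x < 2 * E →
      DifferentiableAt ℝ (fun y => (1 / 2) * bsCall r σ τ y (2 * E - y)) x ∧
      HasDerivAt (deriv (fun y => (1 / 2) * bsCall r σ τ y (2 * E - y)))
        ((1 / (2 * σ * Real.sqrt (2 * Real.pi * τ))) *
          ((1 / x) * Real.exp (-(bsD1 r σ τ x (2 * E - x)) ^ 2 / 2)
            + (Real.exp (-(r * τ)) / (2 * E - x)) *
                Real.exp (-(bsD2 r σ τ x (2 * E - x)) ^ 2 / 2)
            + (2 / (2 * E - x)) * Real.exp (-(bsD1 r σ τ x (2 * E - x)) ^ 2 / 2))) x :=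
  asian_continuation_second_derivative_general r σ τ hσ hτ E
end

section
/- Let Z be a standard Gaussian random variable (mean 0, variance 1) on a probability space, let x > 0, T > 0, and set F = e^{rT}·x and S = F·exp(−σ²T/2 + σ√T·Z). For K > 0 define φ(K) = E[e^{−rT}·(K − S)⁺] if 0 < K ≤ F and φ(K) = E[e^{−rT}·(S − K)⁺] if K > F. Let g : (0, ∞) → ℝ be twice continuously differentiable such that g(S) is integrable and ∫₀^∞ |g''(K)|·φ(K) dK < ∞. Then E[g(S)] = g(F) + e^{rT} · ∫₀^∞ g''(K)·φ(K) dK. -/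
/-!
Taylor's formula with integral remainder around the forward `F`, with the remainder split at `F`
into put payoffs `(K - s)⁺` for strikes `K ≤ F` and call payoffs `(s - K)⁺` for `K > F`, reads
`g s = g F + g' F (s - F) + ∫₀^∞ g''(K) ψ_K(s) dK` for every `s > 0`. Evaluating at `s = S` and
taking expectations kills the linear term because `E[S] = F`, the integrability of `|g''| φ`
justifies exchanging expectation and strike integral (Fubini), and `E[ψ_K(S)] = e^{rT} φ(K)`.
For the lognormal price, `E[S] = F` is the Gaussian moment generating function
`E[exp(cZ)] = exp(c²/2)`.
-/

open MeasureTheory ProbabilityTheory Set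

/-- Payoff at terminal price `s` of the out-of-the-money option with strike `K` and forward `F`:
a put for `K ≤ F`, a call for `K > F`. -/
noncomputable def otmPayoff (F K s : ℝ) : ℝ :=
  if K ≤ F then max (K - s) 0 else max (s - K) 0

lemma otmPayoff_nonneg (F K s : ℝ) : 0 ≤ otmPayoff F K s := by
  unfold otmPayoff
  split_ifs <;> exact le_max_right _ _

lemma otmPayoff_le_add {F K s : ℝ} (hK : 0 ≤ K) (hs : 0 ≤ s) : otmPayoff F K s ≤ K + s := by
  unfold otmPayoff
  split_ifs <;> exact max_le (by linarith) (by linarith)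

lemma measurable_otmPayoff (F : ℝ) : Measurable fun p : ℝ × ℝ => otmPayoff F p.1 p.2 := by
  unfold otmPayoff
  exact Measurable.ite (measurableSet_le measurable_fst measurable_const)
    ((measurable_fst.sub measurable_snd).max measurable_const)
    ((measurable_snd.sub measurable_fst).max measurable_const)

lemma setIntegral_Ioi_mul_otmPayoff (h : ℝ → ℝ) {F s : ℝ} (hF : 0 ≤ F) (hs : 0 ≤ s) :
    ∫ K in Ioi 0, h K * otmPayoff F K s = ∫ K in F..s, h K * (s - K) := by
  -- the payoff vanishes unless the strike lies between `s` and `F`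
  rcases le_or_gt s F with hsF | hFs
  · rw [setIntegral_eq_of_subset_of_forall_sdiff_eq_zero measurableSet_Ioi
      (fun K hK => hs.trans_lt hK.1 : Ioc s F ⊆ Ioi 0), intervalIntegral.integral_symm,
      intervalIntegral.integral_of_le hsF, ← integral_neg]
    · refine setIntegral_congr_fun measurableSet_Ioc fun K hK => ?_
      rw [otmPayoff, if_pos hK.2, max_eq_left (by linarith [hK.1])]
      ring
    · rintro K ⟨-, hK⟩
      rw [mem_Ioc, not_and_or, not_lt, not_le] at hK
      rw [otmPayoff]
      split_ifs <;> rcases hK with hK | hK <;> rw [max_eq_right (by linarith), mul_zero]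
  · rw [setIntegral_eq_of_subset_of_forall_sdiff_eq_zero measurableSet_Ioi
      (fun K hK => hF.trans_lt hK.1 : Ioc F s ⊆ Ioi 0), intervalIntegral.integral_of_le hFs.le]
    · refine setIntegral_congr_fun measurableSet_Ioc fun K hK => ?_
      rw [otmPayoff, if_neg (not_le.2 hK.1), max_eq_left (by linarith [hK.2])]
    · rintro K ⟨-, hK⟩
      rw [mem_Ioc, not_and_or, not_lt, not_le] at hK
      rw [otmPayoff]
      split_ifs <;> rcases hK with hK | hK <;> rw [max_eq_right (by linarith), mul_zero]

theorem taylor_order_one_integral_remainder {g g' g'' : ℝ → ℝ} {a b : ℝ}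
    (hg : ∀ y ∈ uIcc a b, HasDerivAt g (g' y) y)
    (hg' : ∀ y ∈ uIcc a b, HasDerivAt g' (g'' y) y)
    (hg'' : IntervalIntegrable g'' volume a b) :
    ∫ y in a..b, g'' y * (b - y) = g b - g a - g' a * (b - a) := by
  have hderiv : ∀ y ∈ uIcc a b,
      HasDerivAt (fun y => g' y * (b - y) + g y) (g'' y * (b - y)) y := by
    intro y hy
    exact (((hg' y hy).mul ((hasDerivAt_id' y).const_sub b)).add (hg y hy)).congr_deriv
      (by ring)
  rw [intervalIntegral.integral_eq_sub_of_hasDerivAt hderiv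
    (hg''.mul_continuousOn (by fun_prop))]
  ring

theorem ContDiffOn.taylor_order_one_integral_remainder {g : ℝ → ℝ} {U : Set ℝ} {a b : ℝ}
    (hg : ContDiffOn ℝ 2 g U) (hU : IsOpen U) (hab : uIcc a b ⊆ U) :
    ∫ y in a..b, deriv (deriv g) y * (b - y) = g b - g a - deriv g a * (b - a) := by
  have hg' : ContDiffOn ℝ 1 (deriv g) U := hg.deriv_of_isOpen hU (by norm_num)
  refine _root_.taylor_order_one_integral_remainder (fun y hy => ?_) (fun y hy => ?_) ?_
  · exact ((hg.differentiableOn two_ne_zero).differentiableAt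
      (hU.mem_nhds (hab hy))).hasDerivAt
  · exact ((hg'.differentiableOn one_ne_zero).differentiableAt
      (hU.mem_nhds (hab hy))).hasDerivAt
  · exact ((hg'.continuousOn_deriv_of_isOpen hU le_rfl).mono hab).intervalIntegrable

theorem setIntegral_deriv_deriv_mul_otmPayoff {g : ℝ → ℝ} (hg : ContDiffOn ℝ 2 g (Ioi 0))
    {F s : ℝ} (hF : 0 < F) (hs : 0 < s) :
    ∫ K in Ioi 0, deriv (deriv g) K * otmPayoff F K s = g s - g F - deriv g F * (s - F) :=
  (setIntegral_Ioi_mul_otmPayoff _ hF.le hs.le).trans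
    (hg.taylor_order_one_integral_remainder isOpen_Ioi
      fun _ hy => (lt_min hF hs).trans_le hy.1)

section Expectation

variable {Ω : Type*} {mΩ : MeasurableSpace Ω} {μ : Measure Ω}

lemma integrable_otmPayoff [IsFiniteMeasure μ] {S : Ω → ℝ} (hS_meas : Measurable S)
    (hS_nonneg : ∀ ω, 0 ≤ S ω) (hS_int : Integrable S μ) (F : ℝ) {K : ℝ} (hK : 0 ≤ K) :
    Integrable (fun ω => otmPayoff F K (S ω)) μ := by
  refine Integrable.mono' ((integrable_const K).add hS_int)
    ((measurable_otmPayoff F).comp (measurable_const.prodMk hS_meas)).aestronglyMeasurable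
    (ae_of_all _ fun ω => ?_)
  rw [Real.norm_of_nonneg (otmPayoff_nonneg _ _ _)]
  exact otmPayoff_le_add hK (hS_nonneg ω)

theorem integral_comp_eq_add_setIntegral_deriv_deriv_mul_otmPayoff [IsProbabilityMeasure μ]
    {S : Ω → ℝ} (hS_meas : Measurable S) (hS_pos : ∀ ω, 0 < S ω) (hS_int : Integrable S μ)
    {F : ℝ} (hF : ∫ ω, S ω ∂μ = F)
    {g : ℝ → ℝ} (hg : ContDiffOn ℝ 2 g (Ioi 0)) (hg_int : Integrable (fun ω => g (S ω)) μ)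
    (hg''_int : IntegrableOn
      (fun K => |deriv (deriv g) K| * ∫ ω, otmPayoff F K (S ω) ∂μ) (Ioi 0)) :
    ∫ ω, g (S ω) ∂μ
      = g F + ∫ K in Ioi 0, deriv (deriv g) K * ∫ ω, otmPayoff F K (S ω) ∂μ := by
  have hF_pos : 0 < F := by
    rw [← hF, integral_pos_iff_support_of_nonneg (fun ω => (hS_pos ω).le) hS_int,
      Function.support_eq_univ fun ω => (hS_pos ω).ne']
    simp
  set f : ℝ → Ω → ℝ := fun K ω => deriv (deriv g) K * otmPayoff F K (S ω)
  have hf_int : Integrable (Function.uncurry f) ((volume.restrict (Ioi 0)).prod μ) := by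
    have hf_meas : Measurable (Function.uncurry f) :=
      ((measurable_deriv _).comp measurable_fst).mul
        ((measurable_otmPayoff F).comp (measurable_fst.prodMk (hS_meas.comp measurable_snd)))
    refine (integrable_prod_iff hf_meas.aestronglyMeasurable).2 ⟨?_, ?_⟩
    · filter_upwards [ae_restrict_mem measurableSet_Ioi] with K hK
      exact (integrable_otmPayoff hS_meas (fun ω => (hS_pos ω).le) hS_int F hK.le).const_mul
        (deriv (deriv g) K)
    · refine hg''_int.congr (ae_of_all _ fun K => ?_)
      simp only [f, Function.uncurry_apply_pair, norm_mul, Real.norm_eq_abs,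
        abs_of_nonneg (otmPayoff_nonneg _ _ _), integral_const_mul]
  have h_tangent :
      ∫ ω, (g (S ω) - g F - deriv g F * (S ω - F)) ∂μ = ∫ ω, g (S ω) ∂μ - g F := by
    have hg_sub : Integrable (fun ω => g (S ω) - g F) μ := hg_int.sub (integrable_const _)
    have hS_sub : Integrable (fun ω => deriv g F * (S ω - F)) μ :=
      (hS_int.sub (integrable_const _)).const_mul _
    rw [integral_sub hg_sub hS_sub, integral_sub hg_int (integrable_const _), integral_const_mul,
      integral_sub hS_int (integrable_const _), hF]
    simp
  calc ∫ ω, g (S ω) ∂μ = g F + ∫ ω, (g (S ω) - g F - deriv g F * (S ω - F)) ∂μ := by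
        rw [h_tangent]; ring
    _ = g F + ∫ ω, (∫ K in Ioi 0, f K ω) ∂μ := by
        simp_rw [f, setIntegral_deriv_deriv_mul_otmPayoff hg hF_pos (hS_pos _)]
    _ = g F + ∫ K in Ioi 0, deriv (deriv g) K * ∫ ω, otmPayoff F K (S ω) ∂μ := by
        rw [← integral_integral_swap hf_int]
        simp_rw [f, integral_const_mul]

lemma integrable_exp_mul_sub_half_sq [NeZero μ] {Z : Ω → ℝ} (hZ : μ.map Z = gaussianReal 0 1)
    (c : ℝ) :
    Integrable (fun ω => Real.exp (c * Z ω - c ^ 2 / 2)) μ := by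
  simp_rw [Real.exp_sub]
  exact (mgf_pos_iff.1 (by rw [mgf_gaussianReal hZ]; positivity)).div_const _

lemma integral_exp_mul_sub_half_sq {Z : Ω → ℝ} (hZ : μ.map Z = gaussianReal 0 1) (c : ℝ) :
    ∫ ω, Real.exp (c * Z ω - c ^ 2 / 2) ∂μ = 1 := by
  simp_rw [Real.exp_sub]
  rw [integral_div, ← mgf, mgf_gaussianReal hZ]
  simp

end Expectation

theorem lognormal_spanning_formula_general
    {Ω : Type*} {mΩ : MeasurableSpace Ω} {μ : Measure Ω} [IsProbabilityMeasure μ]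
    (r σ : ℝ)
    (Z : Ω → ℝ) (hZ_meas : Measurable Z) (hZ : μ.map Z = gaussianReal 0 1)
    (x T : ℝ) (hx : 0 < x) (hT : 0 < T)
    (F : ℝ) (hF : F = Real.exp (r * T) * x)
    (S : Ω → ℝ)
    (hS : ∀ ω, S ω = F * Real.exp (-σ ^ 2 * T / 2 + σ * Real.sqrt T * Z ω))
    (φ : ℝ → ℝ)
    (hφ : ∀ K : ℝ, 0 < K →
        φ K = if K ≤ F then ∫ ω, Real.exp (-(r * T)) * max (K - S ω) 0 ∂μ
              else ∫ ω, Real.exp (-(r * T)) * max (S ω - K) 0 ∂μ)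
    (g : ℝ → ℝ) (hg : ContDiffOn ℝ 2 g (Set.Ioi 0))
    (hg_int : Integrable (fun ω => g (S ω)) μ)
    (hg''φ_int : IntegrableOn (fun K => |deriv (deriv g) K| * φ K) (Set.Ioi 0)) :
    (∫ ω, g (S ω) ∂μ)
      = g F + Real.exp (r * T) * ∫ K in Set.Ioi (0 : ℝ), deriv (deriv g) K * φ K := by
  set c := σ * Real.sqrt T
  have hS_eq : S = fun ω => F * Real.exp (c * Z ω - c ^ 2 / 2) := by
    funext ω
    rw [hS, mul_pow, Real.sq_sqrt hT.le]
    ring_nf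
  have hF_pos : 0 < F := hF ▸ mul_pos (Real.exp_pos _) hx
  have hS_meas : Measurable S := hS_eq ▸ by fun_prop
  have hS_pos : ∀ ω, 0 < S ω := fun ω => hS_eq ▸ by positivity
  have hS_int : Integrable S μ := hS_eq ▸ (integrable_exp_mul_sub_half_sq hZ c).const_mul F
  have hS_mean : ∫ ω, S ω ∂μ = F := by
    rw [hS_eq, integral_const_mul, integral_exp_mul_sub_half_sq hZ c, mul_one]
  have h_price : ∀ K ∈ Ioi (0 : ℝ), ∫ ω, otmPayoff F K (S ω) ∂μ = Real.exp (r * T) * φ K := by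
    intro K hK
    by_cases hKF : K ≤ F <;>
      simp only [hφ K hK, otmPayoff, hKF, if_true, if_false] <;>
      rw [integral_const_mul, ← mul_assoc, ← Real.exp_add, add_neg_cancel, Real.exp_zero, one_mul]
  have hg''_int : IntegrableOn
      (fun K => |deriv (deriv g) K| * ∫ ω, otmPayoff F K (S ω) ∂μ) (Ioi 0) :=
    IntegrableOn.congr_fun (hg''φ_int.const_mul (Real.exp (r * T)))
      (fun K hK => by rw [h_price K hK, mul_left_comm]) measurableSet_Ioi
  rw [integral_comp_eq_add_setIntegral_deriv_deriv_mul_otmPayoff hS_meas hS_pos hS_int hS_mean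
    hg hg_int hg''_int, ← integral_const_mul]
  congr 1
  refine setIntegral_congr_fun measurableSet_Ioi fun K hK => ?_
  rw [h_price K hK, mul_left_comm]

theorem lognormal_spanning_formula
    {Ω : Type*} {mΩ : MeasurableSpace Ω} {μ : Measure Ω} [IsProbabilityMeasure μ]
    (r σ : ℝ) (hσ : 0 < σ)
    (Z : Ω → ℝ) (hZ_meas : Measurable Z) (hZ : μ.map Z = gaussianReal 0 1)
    (x T : ℝ) (hx : 0 < x) (hT : 0 < T)
    (F : ℝ) (hF : F = Real.exp (r * T) * x)
    (S : Ω → ℝ)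
    (hS : ∀ ω, S ω = F * Real.exp (-σ ^ 2 * T / 2 + σ * Real.sqrt T * Z ω))
    (φ : ℝ → ℝ)
    (hφ : ∀ K : ℝ, 0 < K →
        φ K = if K ≤ F then ∫ ω, Real.exp (-(r * T)) * max (K - S ω) 0 ∂μ
              else ∫ ω, Real.exp (-(r * T)) * max (S ω - K) 0 ∂μ)
    (g : ℝ → ℝ) (hg : ContDiffOn ℝ 2 g (Set.Ioi 0))
    (hg_int : Integrable (fun ω => g (S ω)) μ)
    (hg''φ_int : IntegrableOn (fun K => |deriv (deriv g) K| * φ K) (Set.Ioi 0)) :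
    (∫ ω, g (S ω) ∂μ)
      = g F + Real.exp (r * T) * ∫ K in Set.Ioi (0 : ℝ), deriv (deriv g) K * φ K :=
  lognormal_spanning_formula_general (mΩ := mΩ) r σ Z hZ_meas hZ x T hx hT F hF S hS φ hφ g hg
    hg_int hg''φ_int
end

section
/- Fix E > 0, 0 < T₁ < T₂, set τ₂ = T₂ − T₁, and let Z₁, Z₂ be independent standard Gaussian random variables (mean 0, variance 1) on a probability space. For x > 0 define S₁ = x·exp((r − σ²/2)T₁ + σ√T₁·Z₁) and S₂ = S₁·exp((r − σ²/2)τ₂ + σ√τ₂·Z₂). Define g : (0, ∞) → ℝ by g(y) = (1/2)·c_{τ₂}(y, 2E − y) for 0 < y < 2E and g(y) = (1/2)·(y + e^{−rτ₂}·(y − 2E)) for y ≥ 2E, where c_{τ₂}(x,K) = x·N(d1(x,K)) − K·e^{−rτ₂}·N(d2(x,K)) with d1(x,K) = (log(x/K) + (r + σ²/2)τ₂)/(σ√τ₂) and d2 = d1 − σ√τ₂. Then E[e^{−rT₂}·((S₁ + S₂)/2 − E)⁺] = e^{−rT₁}·E[g(S₁)]. -/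
open MeasureTheory ProbabilityTheory

/-!
Write S₂ = S₁·G with G = exp((r − σ²/2)τ₂ + σ√τ₂·Z₂) independent of S₁. Then
((S₁ + S₂)/2 − E)⁺ = ½·(S₁·G − (2E − S₁))⁺ is half a call on S₁·G with the random
strike 2E − S₁. By independence and Fubini the expectation can be taken over Z₂ first,
with Z₁ frozen. For a positive strike the inner expectation is the Black–Scholes price,
obtained from the Gaussian shift identity E[e^{sZ} f(Z)] = e^{s²/2} E[f(Z + s)]; for a
non-positive strike the payoff is linear in G and its discounted expectation is the
forward value S₁ − (2E − S₁)e^{−rτ₂}.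
-/

open Real Set

lemma stdNormalCDF_eq_measureReal_Iic (y : ℝ) :
    stdNormalCDF y = (gaussianReal 0 1).real (Iic y) := by
  rw [measureReal_def, gaussianReal_apply_eq_integral _ one_ne_zero, ENNReal.toReal_ofReal
    (setIntegral_nonneg measurableSet_Iic fun t _ ↦ gaussianPDFReal_nonneg 0 1 t)]
  simp [stdNormalCDF, gaussianPDFReal, div_eq_inv_mul]

lemma measureReal_Ici_gaussianReal (c : ℝ) :
    (gaussianReal 0 1).real (Ici c) = stdNormalCDF (-c) := by
  have hsymm : (gaussianReal 0 1).map (fun z ↦ -z) = gaussianReal 0 1 := by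
    simpa using gaussianReal_map_neg (μ := 0) (v := 1)
  rw [stdNormalCDF_eq_measureReal_Iic]
  conv_rhs => rw [← hsymm, map_measureReal_apply measurable_neg measurableSet_Iic]
  simp

lemma integral_exp_mul_mul_gaussianReal (s : ℝ) (f : ℝ → ℝ) :
    ∫ z, exp (s * z) * f z ∂gaussianReal 0 1
      = exp (s ^ 2 / 2) * ∫ z, f (z + s) ∂gaussianReal 0 1 := by
  have htilt : ∀ z, gaussianPDFReal 0 1 z * exp (s * z)
      = exp (s ^ 2 / 2) * gaussianPDFReal s 1 z := by
    intro z
    simp only [gaussianPDFReal, NNReal.coe_one, mul_one, sub_zero]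
    rw [mul_left_comm, mul_assoc, ← exp_add, ← exp_add]
    ring_nf
  simp_rw [integral_gaussianReal_eq_integral_smul one_ne_zero, smul_eq_mul, ← mul_assoc, htilt,
    mul_assoc, integral_const_mul]
  rw [← integral_add_right_eq_self _ s]
  simp [gaussianPDFReal_add]

lemma integral_exp_mul_gaussianReal (s : ℝ) :
    ∫ z, exp (s * z) ∂gaussianReal 0 1 = exp (s ^ 2 / 2) := by
  simpa using integral_exp_mul_mul_gaussianReal s 1

lemma integrable_exp_add_mul_gaussianReal (a b : ℝ) :
    Integrable (fun z ↦ exp (a + b * z)) (gaussianReal 0 1) := by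
  simpa [exp_add] using (integrable_exp_mul_gaussianReal b).const_mul (exp a)

lemma setIntegral_Ici_exp_mul_gaussianReal (s c : ℝ) :
    ∫ z in Ici c, exp (s * z) ∂gaussianReal 0 1 = exp (s ^ 2 / 2) * stdNormalCDF (s - c) := by
  have hind : ∀ z, (Ici c).indicator (fun z ↦ exp (s * z)) z
      = exp (s * z) * (Ici c).indicator 1 z := by
    intro z
    by_cases hz : z ∈ Ici c <;> simp [hz]
  have hshift : ∀ z, (Ici c).indicator (1 : ℝ → ℝ) (z + s)
      = (Ici (c - s)).indicator 1 z := by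
    intro z
    simp [indicator_apply]
  rw [← integral_indicator measurableSet_Ici]
  simp_rw [hind, integral_exp_mul_mul_gaussianReal, hshift]
  rw [integral_indicator_one measurableSet_Ici, measureReal_Ici_gaussianReal, neg_sub]

lemma integral_max_mul_exp_sub_gaussianReal {a K s : ℝ} (ha : 0 < a) (hK : 0 < K) (hs : 0 < s) :
    ∫ z, max (a * exp (s * z) - K) 0 ∂gaussianReal 0 1
      = a * exp (s ^ 2 / 2) * stdNormalCDF (s - log (K / a) / s)
        - K * stdNormalCDF (-(log (K / a) / s)) := by
  set c := log (K / a) / s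
  have hin_money : ∀ z, K ≤ a * exp (s * z) ↔ c ≤ z := by
    intro z
    rw [← div_le_iff₀' ha, ← log_le_iff_le_exp (div_pos hK ha), div_le_iff₀ hs, mul_comm]
  have hpayoff : ∀ z, max (a * exp (s * z) - K) 0
      = (Ici c).indicator (fun z ↦ a * exp (s * z) - K) z := by
    intro z
    by_cases hz : c ≤ z
    · simp [hz, (hin_money z).2 hz]
    · simp [hz, (not_le.1 (mt (hin_money z).1 hz)).le]
  simp_rw [hpayoff]
  rw [integral_indicator measurableSet_Ici, integral_sub, integral_const_mul,
    setIntegral_Ici_exp_mul_gaussianReal, setIntegral_const, smul_eq_mul,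
    measureReal_Ici_gaussianReal]
  · ring
  · exact ((integrable_exp_mul_gaussianReal s).const_mul a).integrableOn
  · exact integrableOn_const

lemma integral_discounted_call_gaussianReal_eq_bsCall {r σ τ y K : ℝ} (hσ : 0 < σ) (hτ : 0 < τ)
    (hy : 0 < y) (hK : 0 < K) :
    ∫ z, exp (-(r * τ)) * max (y * exp ((r - σ ^ 2 / 2) * τ + σ * √τ * z) - K) 0
        ∂gaussianReal 0 1 = bsCall r σ τ y K := by
  set s := σ * √τ with hs_def
  have hs : 0 < s := by positivity
  have hs2 : s ^ 2 = σ ^ 2 * τ := by rw [hs_def, mul_pow, sq_sqrt hτ.le]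
  set a := y * exp ((r - σ ^ 2 / 2) * τ) with ha_def
  have ha : 0 < a := by positivity
  have hdiscount : exp (-(r * τ)) * a * exp (s ^ 2 / 2) = y := by
    rw [ha_def, hs2, mul_left_comm, mul_assoc, ← exp_add, ← exp_add]
    ring_nf
    simp
  have hd1 : s - log (K / a) / s = bsD1 r σ τ y K := by
    rw [bsD1, ← hs_def, ha_def, log_div hK.ne' (by positivity), log_mul hy.ne' (by positivity),
      log_exp, log_div hy.ne' hK.ne']
    field_simp
    rw [hs2]
    ring
  have hd2 : -(log (K / a) / s) = bsD2 r σ τ y K := by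
    rw [bsD2, ← hs_def, ← hd1]
    ring
  simp_rw [exp_add, ← mul_assoc y, integral_const_mul]
  rw [integral_max_mul_exp_sub_gaussianReal ha hK hs, hd1, hd2, bsCall, ← hdiscount]
  ring

lemma integral_discounted_forward_gaussianReal {r σ τ y K : ℝ} (hτ : 0 ≤ τ) (hy : 0 ≤ y)
    (hK : K ≤ 0) :
    ∫ z, exp (-(r * τ)) * max (y * exp ((r - σ ^ 2 / 2) * τ + σ * √τ * z) - K) 0
        ∂gaussianReal 0 1 = y - K * exp (-(r * τ)) := by
  have hpayoff : ∀ z, max (y * exp ((r - σ ^ 2 / 2) * τ + σ * √τ * z) - K) 0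
      = y * exp ((r - σ ^ 2 / 2) * τ) * exp (σ * √τ * z) - K := by
    intro z
    rw [max_eq_left (sub_nonneg.2 (hK.trans (by positivity))), exp_add]
    ring
  simp_rw [hpayoff]
  rw [integral_const_mul, integral_sub ((integrable_exp_mul_gaussianReal _).const_mul _)
    (integrable_const K), integral_const_mul, integral_exp_mul_gaussianReal, integral_const,
    mul_pow, sq_sqrt hτ, probReal_univ, one_smul]
  have hdiscount :
      exp (-(r * τ)) * exp ((r - σ ^ 2 / 2) * τ) * exp (σ ^ 2 * τ / 2) = 1 := by
    rw [← exp_add, ← exp_add, ← exp_zero]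
    ring_nf
  linear_combination y * hdiscount

lemma integral_discounted_asian_payoff_gaussianReal {r σ τ E y : ℝ} (hσ : 0 < σ) (hτ : 0 < τ)
    (hy : 0 < y) :
    ∫ z, exp (-(r * τ)) * max ((y + y * exp ((r - σ ^ 2 / 2) * τ + σ * √τ * z)) / 2 - E) 0
        ∂gaussianReal 0 1
      = if y < 2 * E then (1 / 2) * bsCall r σ τ y (2 * E - y)
        else (1 / 2) * (y + exp (-(r * τ)) * (y - 2 * E)) := by
  have hhalf : ∀ u : ℝ,
      max ((y + y * u) / 2 - E) 0 = 1 / 2 * max (y * u - (2 * E - y)) 0 := by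
    intro u
    rw [mul_max_of_nonneg _ _ (by norm_num : (0 : ℝ) ≤ 1 / 2), mul_zero]
    ring_nf
  simp_rw [hhalf, mul_left_comm (exp _) (1 / 2 : ℝ)]
  rw [integral_const_mul]
  split_ifs with hyE
  · rw [integral_discounted_call_gaussianReal_eq_bsCall hσ hτ hy (by linarith)]
  · rw [integral_discounted_forward_gaussianReal hτ.le hy.le (by linarith)]
    ring

lemma ProbabilityTheory.IndepFun.integral_comp_eq_integral_integral {Ω α β : Type*}
    {mΩ : MeasurableSpace Ω} {μ : Measure Ω} [IsFiniteMeasure μ] {mα : MeasurableSpace α}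
    {mβ : MeasurableSpace β} {X : Ω → α} {Y : Ω → β} (hX : AEMeasurable X μ)
    (hY : AEMeasurable Y μ) (hXY : IndepFun X Y μ) {F : α × β → ℝ}
    (hF : Integrable F ((μ.map X).prod (μ.map Y))) :
    ∫ ω, F (X ω, Y ω) ∂μ = ∫ ω, ∫ y, F (X ω, y) ∂μ.map Y ∂μ := by
  have hlaw := hXY.map_prod_eq_prod_map_map hX hY
  calc ∫ ω, F (X ω, Y ω) ∂μ = ∫ p, F p ∂(μ.map X).prod (μ.map Y) := by
        rw [← hlaw, integral_map (hX.prodMk hY) (hlaw ▸ hF.aestronglyMeasurable)]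
    _ = ∫ x, ∫ y, F (x, y) ∂μ.map Y ∂μ.map X := integral_prod F hF
    _ = ∫ ω, ∫ y, F (X ω, y) ∂μ.map Y ∂μ :=
        integral_map hX hF.integral_prod_left.aestronglyMeasurable

theorem asian_two_obs_tower_reduction_general
    {Ω : Type*} {mΩ : MeasurableSpace Ω} {μ : Measure Ω} [IsProbabilityMeasure μ]
    (r σ : ℝ) (hσ : 0 < σ) (E : ℝ)
    (T₁ T₂ : ℝ) (hT₁₂ : T₁ < T₂)
    (τ₂ : ℝ) (hτ₂ : τ₂ = T₂ - T₁)
    (Z₁ Z₂ : Ω → ℝ) (hZ₁_meas : Measurable Z₁) (hZ₂_meas : Measurable Z₂)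
    (hindep : IndepFun Z₁ Z₂ μ)
    (hZ₁ : μ.map Z₁ = gaussianReal 0 1) (hZ₂ : μ.map Z₂ = gaussianReal 0 1)
    (x : ℝ) (hx : 0 < x)
    (S₁ S₂ : Ω → ℝ)
    (hS₁ : ∀ ω, S₁ ω = x * Real.exp ((r - σ ^ 2 / 2) * T₁ + σ * Real.sqrt T₁ * Z₁ ω))
    (hS₂ : ∀ ω, S₂ ω = S₁ ω * Real.exp ((r - σ ^ 2 / 2) * τ₂ + σ * Real.sqrt τ₂ * Z₂ ω))
    (g : ℝ → ℝ)
    (hg : ∀ y : ℝ, 0 < y →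
        g y = if y < 2 * E then (1 / 2) * bsCall r σ τ₂ y (2 * E - y)
              else (1 / 2) * (y + Real.exp (-(r * τ₂)) * (y - 2 * E))) :
    (∫ ω, Real.exp (-(r * T₂)) * max ((S₁ ω + S₂ ω) / 2 - E) 0 ∂μ)
      = Real.exp (-(r * T₁)) * ∫ ω, g (S₁ ω) ∂μ := by
  have hτ : 0 < τ₂ := by linarith
  set S : ℝ → ℝ := fun z ↦ x * exp ((r - σ ^ 2 / 2) * T₁ + σ * √T₁ * z)
  set G : ℝ → ℝ := fun z ↦ exp ((r - σ ^ 2 / 2) * τ₂ + σ * √τ₂ * z)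
  set F : ℝ × ℝ → ℝ := fun p ↦
    exp (-(r * T₁)) * (exp (-(r * τ₂)) * max ((S p.1 + S p.1 * G p.2) / 2 - E) 0)
  have hF : Integrable F ((μ.map Z₁).prod (μ.map Z₂)) := by
    rw [hZ₁, hZ₂]
    have hS : Integrable S (gaussianReal 0 1) :=
      (integrable_exp_add_mul_gaussianReal _ _).const_mul x
    have hmean : Integrable (fun p : ℝ × ℝ ↦ (S p.1 + S p.1 * G p.2) / 2 - E)
        ((gaussianReal 0 1).prod (gaussianReal 0 1)) :=
      (((hS.comp_fst _).add (hS.mul_prod (integrable_exp_add_mul_gaussianReal _ _))).div_const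
        2).sub (integrable_const E)
    exact (hmean.pos_part.const_mul _).const_mul _
  have hpayoff : ∀ ω,
      exp (-(r * T₂)) * max ((S₁ ω + S₂ ω) / 2 - E) 0 = F (Z₁ ω, Z₂ ω) := by
    intro ω
    rw [show T₂ = T₁ + τ₂ by linarith, mul_add, neg_add, exp_add, hS₂, hS₁, mul_assoc]
  have hcontinuation : ∀ ω,
      ∫ z, F (Z₁ ω, z) ∂μ.map Z₂ = exp (-(r * T₁)) * g (S₁ ω) := by
    intro ω
    simp only [F, S, G]
    rw [hZ₂, integral_const_mul, hS₁, hg _ (by positivity),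
      integral_discounted_asian_payoff_gaussianReal hσ hτ (by positivity)]
  simp_rw [hpayoff, hindep.integral_comp_eq_integral_integral hZ₁_meas.aemeasurable
    hZ₂_meas.aemeasurable hF, hcontinuation]
  exact integral_const_mul _ _

theorem asian_two_obs_tower_reduction
    {Ω : Type*} {mΩ : MeasurableSpace Ω} {μ : Measure Ω} [IsProbabilityMeasure μ]
    (r σ : ℝ) (hσ : 0 < σ) (E : ℝ) (hE : 0 < E)
    (T₁ T₂ : ℝ) (hT₁ : 0 < T₁) (hT₁₂ : T₁ < T₂)
    (τ₂ : ℝ) (hτ₂ : τ₂ = T₂ - T₁)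
    (Z₁ Z₂ : Ω → ℝ) (hZ₁_meas : Measurable Z₁) (hZ₂_meas : Measurable Z₂)
    (hindep : IndepFun Z₁ Z₂ μ)
    (hZ₁ : μ.map Z₁ = gaussianReal 0 1) (hZ₂ : μ.map Z₂ = gaussianReal 0 1)
    (x : ℝ) (hx : 0 < x)
    (S₁ S₂ : Ω → ℝ)
    (hS₁ : ∀ ω, S₁ ω = x * Real.exp ((r - σ ^ 2 / 2) * T₁ + σ * Real.sqrt T₁ * Z₁ ω))
    (hS₂ : ∀ ω, S₂ ω = S₁ ω * Real.exp ((r - σ ^ 2 / 2) * τ₂ + σ * Real.sqrt τ₂ * Z₂ ω))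
    (g : ℝ → ℝ)
    (hg : ∀ y : ℝ, 0 < y →
        g y = if y < 2 * E then (1 / 2) * bsCall r σ τ₂ y (2 * E - y)
              else (1 / 2) * (y + Real.exp (-(r * τ₂)) * (y - 2 * E))) :
    (∫ ω, Real.exp (-(r * T₂)) * max ((S₁ ω + S₂ ω) / 2 - E) 0 ∂μ)
      = Real.exp (-(r * T₁)) * ∫ ω, g (S₁ ω) ∂μ :=
  asian_two_obs_tower_reduction_general (mΩ := mΩ) r σ hσ E T₁ T₂ hT₁₂ τ₂ hτ₂ Z₁ Z₂ hZ₁_meas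
    hZ₂_meas hindep hZ₁ hZ₂ x hx S₁ S₂ hS₁ hS₂ g hg
end
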